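/- arXiv:1007.0309 — 3 statements merged into one kernel-verified Lean document; each statement's English description precedes it below -/
import Mathlib

section
/- Let Ω be a measurable set, p > 2, and w ∈ L^2(Ω) ∩ L^p(Ω) with ‖w‖_{L^2(Ω)} > 0. Then ∫_Ω |w|^2 log(|w|^2/‖w‖_{L^2(Ω)}^2) dx ≤ (p/(p-2)) · ‖w‖_{L^2(Ω)}^2 · log(‖w‖_{L^p(Ω)}^2/‖w‖_{L^2(Ω)}^2). -/
/-!
Write `g = w²`, `q = p / 2`, `m = ∫ g = ‖w‖₂²` and `K = ∫ g^q = ‖w‖ₚ^p`. The inequality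
`log y ≤ y - 1` at `y = (g / m)^(q - 1) / λ` gives, after multiplying by `g`,
`(q - 1) g log (g / m) ≤ m g^q / (λ m^q) + (log λ - 1) g` pointwise. Integrating with the choice
`λ = K / m^q`, which makes the first term integrate to `m`, yields
`(q - 1) ∫ g log (g / m) ≤ m log (K / m^q) = (q - 1)·(p / (p - 2))·m log (‖w‖ₚ² / ‖w‖₂²)`.
-/

open MeasureTheory Real

theorem mul_log_le_rpow_div_add {s q c : ℝ} (hs : 0 ≤ s) (hq : 1 < q) (hc : 0 < c) :
    (q - 1) * (s * log s) ≤ s ^ q / c + s * (log c - 1) := by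
  rcases hs.eq_or_lt with rfl | hs
  · simp [zero_rpow (by linarith : q ≠ 0)]
  have hsq : 0 < s ^ (q - 1) := rpow_pos_of_pos hs _
  have key : (q - 1) * log s ≤ s ^ (q - 1) / c + log c - 1 := by
    have := log_le_sub_one_of_pos (div_pos hsq hc)
    rw [log_div hsq.ne' hc.ne', log_rpow hs] at this
    linarith
  have hsq' : s ^ q = s * s ^ (q - 1) := by
    rw [← rpow_one_add' hs.le (by linarith)]
    ring_nf
  calc (q - 1) * (s * log s) = s * ((q - 1) * log s) := by ring
    _ ≤ s * (s ^ (q - 1) / c + log c - 1) := mul_le_mul_of_nonneg_left key hs.le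
    _ = s ^ q / c + s * (log c - 1) := by rw [hsq']; ring

theorem mul_log_div_le {x q m K : ℝ} (hx : 0 ≤ x) (hq : 1 < q) (hm : 0 < m) (hK : 0 < K) :
    (q - 1) * (x * log (x / m)) ≤ m / K * x ^ q + (log (K / m ^ q) - 1) * x := by
  have hmq : 0 < m ^ q := rpow_pos_of_pos hm q
  have h := mul_le_mul_of_nonneg_left
    (mul_log_le_rpow_div_add (div_nonneg hx hm.le) hq (div_pos hK hmq)) hm.le
  rw [div_rpow hx hm.le, div_div_div_cancel_right₀ hmq.ne'] at h
  field_simp at h ⊢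
  linarith

section

variable {α : Type*} [MeasurableSpace α] {μ : Measure α}

theorem lpNorm_ofReal_rpow {E : Type*} [NormedAddCommGroup E] {f : α → E} {p : ℝ}
    (hp : 0 < p) (hf : AEStronglyMeasurable f μ) :
    lpNorm f (ENNReal.ofReal p) μ ^ p = ∫ x, ‖f x‖ ^ p ∂μ := by
  rw [lpNorm_eq_integral_norm_rpow_toReal (by simpa using hp)
    ENNReal.ofReal_ne_top hf, ENNReal.toReal_ofReal hp.le,
    ← rpow_mul (integral_nonneg fun x => by positivity), inv_mul_cancel₀ hp.ne', rpow_one]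

theorem integral_mul_log_div_integral_le {g : α → ℝ} {q : ℝ} (hq : 1 < q) (hg : 0 ≤ g)
    (hg_int : Integrable g μ) (hgq_int : Integrable (fun x => g x ^ q) μ)
    (hglog_int : Integrable (fun x => g x * log (g x / ∫ y, g y ∂μ)) μ)
    (hpos : 0 < ∫ x, g x ∂μ) :
    (q - 1) * ∫ x, g x * log (g x / ∫ y, g y ∂μ) ∂μ ≤
      (∫ x, g x ∂μ) * log ((∫ x, g x ^ q ∂μ) / (∫ x, g x ∂μ) ^ q) := by
  set m := ∫ x, g x ∂μ with hm
  set K := ∫ x, g x ^ q ∂μ with hK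
  have hsupp : Function.support (fun x => g x ^ q) = Function.support g := by
    ext x
    simp only [Function.mem_support, ne_eq, rpow_eq_zero (hg x) (by linarith : q ≠ 0)]
  have hKpos : 0 < K := by
    rwa [hK, integral_pos_iff_support_of_nonneg (fun x => rpow_nonneg (hg x) q) hgq_int, hsupp,
      ← integral_pos_iff_support_of_nonneg hg hg_int]
  calc (q - 1) * ∫ x, g x * log (g x / m) ∂μ
      = ∫ x, (q - 1) * (g x * log (g x / m)) ∂μ := (integral_const_mul _ _).symm
    _ ≤ ∫ x, (m / K * g x ^ q + (log (K / m ^ q) - 1) * g x) ∂μ :=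
        integral_mono (hglog_int.const_mul _) ((hgq_int.const_mul _).add (hg_int.const_mul _))
          fun x => mul_log_div_le (hg x) hq hpos hKpos
    _ = m * log (K / m ^ q) := by
        rw [integral_add (hgq_int.const_mul _) (hg_int.const_mul _), integral_const_mul,
          integral_const_mul, ← hm, ← hK]
        field_simp
        ring

end

theorem sq_rpow_div_two (a p : ℝ) : (a ^ 2) ^ (p / 2) = ‖a‖ ^ p := by
  rw [← sq_abs, Real.norm_eq_abs, ← rpow_natCast, ← rpow_mul (abs_nonneg a)]
  congr 1
  push_cast
  ring

theorem stmt5_general (d : ℕ) (Ω : Set (EuclideanSpace ℝ (Fin d)))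
    (p : ℝ) (hp : 2 < p) (w : EuclideanSpace ℝ (Fin d) → ℝ)
    (hw2 : MemLp w (ENNReal.ofReal 2) (volume.restrict Ω))
    (hwp : MemLp w (ENNReal.ofReal p) (volume.restrict Ω))
    (hne : 0 < (eLpNorm w (ENNReal.ofReal 2) (volume.restrict Ω)).toReal)
    (hint : Integrable
      (fun x => (w x) ^ 2 *
        Real.log ((w x) ^ 2 / ((eLpNorm w (ENNReal.ofReal 2) (volume.restrict Ω)).toReal) ^ 2))
      (volume.restrict Ω)) :
    ∫ x in Ω, (w x) ^ 2 *
        Real.log ((w x) ^ 2 / ((eLpNorm w (ENNReal.ofReal 2) (volume.restrict Ω)).toReal) ^ 2) ≤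
      p / (p - 2) * ((eLpNorm w (ENNReal.ofReal 2) (volume.restrict Ω)).toReal) ^ 2 *
        Real.log (((eLpNorm w (ENNReal.ofReal p) (volume.restrict Ω)).toReal) ^ 2 /
          ((eLpNorm w (ENNReal.ofReal 2) (volume.restrict Ω)).toReal) ^ 2) := by
  rw [toReal_eLpNorm hw2.1] at hne hint ⊢
  rw [toReal_eLpNorm hwp.1]
  set μ := volume.restrict Ω
  set M := lpNorm w (ENNReal.ofReal 2) μ
  set N := lpNorm w (ENNReal.ofReal p) μ
  have hp0 : ENNReal.ofReal p ≠ 0 := by simp; linarith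
  have hN : 0 < N := lpNorm_nonneg.lt_of_ne' fun h =>
    hne.ne' ((lpNorm_eq_zero hw2 (by simp)).2 ((lpNorm_eq_zero hwp hp0).1 h))
  have hM2 : ∫ x, w x ^ 2 ∂μ = M ^ 2 := by
    simpa only [rpow_two, Real.norm_eq_abs, sq_abs] using (lpNorm_ofReal_rpow two_pos hw2.1).symm
  have hNp : ∫ x, (w x ^ 2) ^ (p / 2) ∂μ = N ^ p := by
    simpa only [sq_rpow_div_two] using (lpNorm_ofReal_rpow (by linarith) hwp.1).symm
  have hsq_int : Integrable (fun x => w x ^ 2) μ := by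
    rw [ENNReal.ofReal_ofNat] at hw2
    exact hw2.integrable_sq
  have hpow_int : Integrable (fun x => (w x ^ 2) ^ (p / 2)) μ := by
    simpa only [sq_rpow_div_two, ENNReal.toReal_ofReal (by linarith : 0 ≤ p)] using
      hwp.integrable_norm_rpow hp0 ENNReal.ofReal_ne_top
  have key := integral_mul_log_div_integral_le (μ := μ) (g := fun x => w x ^ 2) (q := p / 2)
    (by linarith) (fun x => sq_nonneg _) hsq_int hpow_int (hM2 ▸ hint) (by rw [hM2]; positivity)
  rw [hM2, hNp, sq_rpow_div_two, Real.norm_of_nonneg hne.le, ← div_rpow hN.le hne.le] at key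
  have hlog : log ((N / M) ^ p) = p / 2 * log (N ^ 2 / M ^ 2) := by
    rw [log_rpow (div_pos hN hne), ← div_pow, log_pow]
    push_cast
    ring
  rw [hlog] at key
  have hq : 0 < p / 2 - 1 := by linarith
  have hp2 : p - 2 ≠ 0 := by linarith
  rw [show p / (p - 2) * M ^ 2 * log (N ^ 2 / M ^ 2) =
      M ^ 2 * (p / 2 * log (N ^ 2 / M ^ 2)) / (p / 2 - 1) by field_simp]
  exact (le_div_iff₀' hq).2 key

/-- For `p > 2` and `w ∈ L² ∩ L^p(Ω)` with `‖w‖₂ > 0`,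
`∫_Ω |w|² log(|w|²/‖w‖₂²) ≤ (p/(p-2)) ‖w‖₂² log(‖w‖_p²/‖w‖₂²)`. -/
theorem stmt5 (d : ℕ) (Ω : Set (EuclideanSpace ℝ (Fin d))) (hΩ : MeasurableSet Ω)
    (p : ℝ) (hp : 2 < p) (w : EuclideanSpace ℝ (Fin d) → ℝ)
    (hw2 : MemLp w (ENNReal.ofReal 2) (volume.restrict Ω))
    (hwp : MemLp w (ENNReal.ofReal p) (volume.restrict Ω))
    (hne : 0 < (eLpNorm w (ENNReal.ofReal 2) (volume.restrict Ω)).toReal)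
    (hint : Integrable
      (fun x => (w x) ^ 2 *
        Real.log ((w x) ^ 2 / ((eLpNorm w (ENNReal.ofReal 2) (volume.restrict Ω)).toReal) ^ 2))
      (volume.restrict Ω)) :
    ∫ x in Ω, (w x) ^ 2 *
        Real.log ((w x) ^ 2 / ((eLpNorm w (ENNReal.ofReal 2) (volume.restrict Ω)).toReal) ^ 2) ≤
      p / (p - 2) * ((eLpNorm w (ENNReal.ofReal 2) (volume.restrict Ω)).toReal) ^ 2 *
        Real.log (((eLpNorm w (ENNReal.ofReal p) (volume.restrict Ω)).toReal) ^ 2 /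
          ((eLpNorm w (ENNReal.ofReal 2) (volume.restrict Ω)).toReal) ^ 2) :=
  stmt5_general d Ω p hp w hw2 hwp hne hint
end

section
/- Let γ ∈ ℝ and a_c ∈ ℝ, and define r(γ) := (2/d)·γ·(γ - a_c) with a_c = (d-2)/2. For a smooth compactly supported radial function g : ℝ^d → ℝ with ∫ g ≠ 0, and g_n(x) := g(x + n e) for a unit vector e, one has ∫ |x|^{-2γ} g_n(x) dx = n^{-2γ}[ ∫g + (r(γ)/n²)·∫|x|²g + o(n^{-2}) ] as n → ∞. -/
open MeasureTheory Asymptotics Filter Set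


lemma hderiv_onepow (c : ℝ) {w : ℝ} (hw : 0 < 1 + w) :
    HasDerivAt (fun x : ℝ => (1 + x) ^ c) (c * (1 + w) ^ (c - 1)) w := by
  have h1 : HasDerivAt (fun x : ℝ => 1 + x) 1 w := (hasDerivAt_id w).const_add 1
  have h2 := Real.hasDerivAt_rpow_const (x := 1 + w) (p := c) (Or.inl hw.ne')
  simpa [Function.comp_def] using h2.comp w h1

/-- If F 0 = 0 and |F'| ≤ B|w|^k on [-1/2,1/2], then |F| ≤ B|w|^(k+1) there. -/
lemma key_step (F F' : ℝ → ℝ) (B : ℝ) (k : ℕ)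
    (hd : ∀ w : ℝ, |w| ≤ 1/2 → HasDerivAt F (F' w) w)
    (hc : ∀ w : ℝ, |w| ≤ 1/2 → ContinuousAt F' w)
    (h0 : F 0 = 0) (hB : 0 ≤ B)
    (hb : ∀ w : ℝ, |w| ≤ 1/2 → |F' w| ≤ B * |w| ^ k) :
    ∀ w : ℝ, |w| ≤ 1/2 → |F w| ≤ B * |w| ^ (k + 1) := by
  intro w hw
  have hsub : ∀ t : ℝ, t ∈ uIcc 0 w → |t| ≤ 1/2 := by
    intro t ht
    rw [uIcc_eq_union] at ht
    rcases ht with ht | ht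
    · rcases mem_Icc.1 ht with ⟨h1, h2⟩
      rw [abs_le]; constructor <;> [linarith [abs_le.1 hw]; linarith [(abs_le.1 hw).2]]
    · rcases mem_Icc.1 ht with ⟨h1, h2⟩
      rw [abs_le]; constructor <;> [linarith [(abs_le.1 hw).1]; linarith]
  have hint : IntervalIntegrable F' volume 0 w := by
    apply ContinuousOn.intervalIntegrable
    intro t ht; exact (hc t (hsub t ht)).continuousWithinAt
  have heq : ∫ t in (0:ℝ)..w, F' t = F w - F 0 :=
    intervalIntegral.integral_eq_sub_of_hasDerivAt (fun t ht => hd t (hsub t ht)) hint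
  have hb2 : ∀ t ∈ uIoc (0:ℝ) w, ‖F' t‖ ≤ B * |w| ^ k := by
    intro t ht
    have ht' : |t| ≤ 1/2 := hsub t (uIoc_subset_uIcc ht)
    have htw : |t| ≤ |w| := by
      rcases mem_uIoc.1 ht with ht | ht
      · rw [abs_le]; constructor
        · linarith [ht.1, abs_nonneg w, le_abs_self w]
        · linarith [ht.2, le_abs_self w]
      · rw [abs_le]; constructor
        · linarith [ht.1, neg_abs_le w]
        · linarith [ht.2, abs_nonneg w]
    calc ‖F' t‖ ≤ B * |t| ^ k := hb t ht'
      _ ≤ B * |w| ^ k := by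
          exact mul_le_mul_of_nonneg_left (pow_le_pow_left₀ (abs_nonneg t) htw k) hB
  have hle := intervalIntegral.norm_integral_le_of_norm_le_const hb2
  rw [heq, h0, sub_zero] at hle
  calc |F w| ≤ B * |w| ^ k * |w - 0| := hle
    _ = B * |w| ^ (k + 1) := by rw [sub_zero]; ring

lemma taylor1 (γ : ℝ) : ∃ C : ℝ, 0 ≤ C ∧ ∀ w : ℝ, |w| ≤ 1/2 →
    |(1 + w) ^ (-γ) - (1 - γ * w + γ * (γ + 1) / 2 * w ^ 2)| ≤ C * |w| ^ 3 := by
  set G0 : ℝ → ℝ := fun w => (1 + w) ^ (-γ) - (1 - γ * w + γ * (γ + 1) / 2 * w ^ 2) with hG0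
  set G1 : ℝ → ℝ := fun w => -γ * (1 + w) ^ (-γ - 1) - (-γ + γ * (γ + 1) * w) with hG1
  set G2 : ℝ → ℝ := fun w => γ * (γ + 1) * (1 + w) ^ (-γ - 2) - γ * (γ + 1) with hG2
  set G3 : ℝ → ℝ := fun w => -(γ * (γ + 1) * (γ + 2)) * (1 + w) ^ (-γ - 3) with hG3
  have hpos : ∀ w : ℝ, |w| ≤ 1/2 → 0 < 1 + w := by
    intro w hw; linarith [(abs_le.1 hw).1]
  have hd0 : ∀ w : ℝ, |w| ≤ 1/2 → HasDerivAt G0 (G1 w) w := by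
    intro w hw
    have h := hderiv_onepow (-γ) (hpos w hw)
    have hp : HasDerivAt (fun x : ℝ => 1 - γ * x + γ * (γ + 1) / 2 * x ^ 2)
        (-γ + γ * (γ + 1) * w) w := by
      have h2 : HasDerivAt (fun x : ℝ => 1 - γ * x + γ * (γ + 1) / 2 * x ^ 2)
          (0 - γ * 1 + γ * (γ + 1) / 2 * (↑2 * w ^ 1)) w :=
        (((hasDerivAt_const w (1:ℝ)).sub ((hasDerivAt_id w).const_mul γ)).add
          (((hasDerivAt_pow 2 w)).const_mul (γ * (γ + 1) / 2)))
      convert h2 using 1 <;> push_cast <;> ring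
    have h3 := h.sub hp
    exact h3
  have hd1 : ∀ w : ℝ, |w| ≤ 1/2 → HasDerivAt G1 (G2 w) w := by
    intro w hw
    have h := (hderiv_onepow (-γ - 1) (hpos w hw)).const_mul (-γ)
    have hp : HasDerivAt (fun x : ℝ => -γ + γ * (γ + 1) * x) (γ * (γ + 1)) w := by
      simpa using ((hasDerivAt_id w).const_mul (γ * (γ + 1))).const_add (-γ)
    have h3 := h.sub hp
    refine h3.congr_deriv ?_; simp [hG2]; ring_nf
  have hd2 : ∀ w : ℝ, |w| ≤ 1/2 → HasDerivAt G2 (G3 w) w := by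
    intro w hw
    have h := ((hderiv_onepow (-γ - 2) (hpos w hw)).const_mul (γ * (γ + 1))).sub_const (γ * (γ + 1))
    refine h.congr_deriv ?_; simp [hG3]; ring_nf
  have hcrp : ∀ c : ℝ, ∀ w : ℝ, |w| ≤ 1/2 → ContinuousAt (fun x : ℝ => (1 + x) ^ c) w := by
    intro c w hw
    exact ContinuousAt.rpow_const (by fun_prop) (Or.inl (hpos w hw).ne')
  have hcont3 : ContinuousOn G3 (Icc (-(1/2) : ℝ) (1/2)) := by
    intro x hx
    have hx' : |x| ≤ 1/2 := abs_le.2 ⟨(mem_Icc.1 hx).1, (mem_Icc.1 hx).2⟩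
    exact ((continuousAt_const.mul (hcrp (-γ-3) x hx')).continuousWithinAt)
  obtain ⟨M, hM⟩ := (isCompact_Icc (a := (-(1/2):ℝ)) (b := 1/2)).exists_bound_of_continuousOn hcont3
  have hM0 : 0 ≤ M := le_trans (norm_nonneg _) (hM 0 (by norm_num))
  have hb3 : ∀ w : ℝ, |w| ≤ 1/2 → |G3 w| ≤ M * |w| ^ 0 := by
    intro w hw
    simpa using hM w (abs_le.1 hw)
  have hb2 := key_step G2 G3 M 0 hd2
    (fun w hw => (continuousAt_const.mul (hcrp (-γ-3) w hw)))
    (by simp [hG2]) hM0 hb3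
  have hb1 := key_step G1 G2 M 1 hd1
    (fun w hw => ((continuousAt_const.mul (hcrp (-γ-2) w hw)).sub continuousAt_const))
    (by simp [hG1]) hM0 (by simpa using hb2)
  have hb0 := key_step G0 G1 M 2 hd0
    (fun w hw => ((continuousAt_const.mul (hcrp (-γ-1) w hw)).sub
      (continuousAt_const.add (continuousAt_const.mul continuousAt_id))))
    (by simp [hG0]) hM0 hb1
  exact ⟨M, hM0, hb0⟩

section
variable {d : ℕ}

local notation "E" => EuclideanSpace ℝ (Fin d)




lemma integ_mul {g : E → ℝ} (hgc : Continuous g) (hsupp : HasCompactSupport g)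
    (f : E → ℝ) (hf : Continuous f) :
    Integrable (fun y : E => f y * g y) := by
  exact (hf.mul hgc).integrable_of_hasCompactSupport (hsupp.mul_left)

lemma first_moment_zero {g : E → ℝ} (hgc : Continuous g)
    (hrad : ∀ x y : E, ‖x‖ = ‖y‖ → g x = g y) (e : E) :
    (∫ y : E, (inner ℝ y e : ℝ) * g y) = 0 := by
  have h := MeasureTheory.integral_neg_eq_self (fun y : E => (inner ℝ y e : ℝ) * g y) volume
  have heq : ∀ y : E, (inner ℝ (-y) e : ℝ) * g (-y) = -((inner ℝ y e : ℝ) * g y) := by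
    intro y
    rw [inner_neg_left, hrad (-y) y (by simp)]
    ring
  rw [show (∫ y : E, (inner ℝ (-y) e : ℝ) * g (-y)) = ∫ y : E, -((inner ℝ y e : ℝ) * g y) from
    integral_congr_ae (Filter.Eventually.of_forall heq)] at h
  rw [integral_neg] at h
  linarith

lemma second_moment_eq {g : E → ℝ} (hgc : Continuous g)
    (hrad : ∀ x y : E, ‖x‖ = ‖y‖ → g x = g y) {u v : E} (hu : ‖u‖ = ‖v‖) :
    (∫ y : E, (inner ℝ y u : ℝ) ^ 2 * g y) = ∫ y : E, (inner ℝ y v : ℝ) ^ 2 * g y := by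
  set T : E ≃ₗᵢ[ℝ] E := Submodule.reflection (Submodule.span ℝ {u - v})ᗮ with hT
  have hTu : T u = v := Submodule.reflection_sub hu
  have := (T.measurePreserving).integral_comp (T.toHomeomorph.measurableEmbedding)
    (fun y : E => (inner ℝ y v : ℝ) ^ 2 * g y)
  rw [← this]
  congr 1
  funext y
  rw [← hTu, T.inner_map_map, hrad (T y) y (T.norm_map y)]

lemma second_moment_avg (hd : 1 ≤ d) {g : E → ℝ} (hgc : Continuous g)
    (hsupp : HasCompactSupport g)
    (hrad : ∀ x y : E, ‖x‖ = ‖y‖ → g x = g y) {e : E} (he : ‖e‖ = 1) :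
    (d : ℝ) * (∫ y : E, (inner ℝ y e : ℝ) ^ 2 * g y) = ∫ y : E, ‖y‖ ^ 2 * g y := by
  set b := EuclideanSpace.basisFun (Fin d) ℝ with hb
  have hsum : ∀ y : E, ∑ i : Fin d, (inner ℝ y (b i) : ℝ) ^ 2 * g y = ‖y‖ ^ 2 * g y := by
    intro y
    rw [← Finset.sum_mul]
    congr 1
    have := b.sum_inner_mul_inner y y
    rw [real_inner_self_eq_norm_sq] at this
    rw [← this]
    congr 1; funext i
    rw [sq, real_inner_comm (b i) y]
  have hint : ∀ i ∈ Finset.univ, Integrable (fun y : E => (inner ℝ y (b i) : ℝ) ^ 2 * g y) := by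
    intro i _
    exact integ_mul hgc hsupp _ ((continuous_id.inner continuous_const).pow 2)
  have h1 : (∫ y : E, ‖y‖ ^ 2 * g y) = ∑ i : Fin d, ∫ y : E, (inner ℝ y (b i) : ℝ) ^ 2 * g y := by
    rw [← integral_finset_sum _ hint]
    exact integral_congr_ae (Filter.Eventually.of_forall fun y => (hsum y).symm)
  have h2 : ∀ i : Fin d, (∫ y : E, (inner ℝ y (b i) : ℝ) ^ 2 * g y)
      = ∫ y : E, (inner ℝ y e : ℝ) ^ 2 * g y := by
    intro i
    exact second_moment_eq hgc hrad ((b.orthonormal.1 i).trans he.symm)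
  rw [h1]
  simp only [h2]
  simp [mul_comm]

lemma ptwise (γ : ℝ) (e : E) (he : ‖e‖ = 1) (R : ℝ) (hR : 1 ≤ R) :
    ∃ C : ℝ, 0 ≤ C ∧ ∀ ε : ℝ, |ε| ≤ 1/(8*R) → ∀ y : E, ‖y‖ ≤ R →
    |‖e - ε • y‖ ^ (-(2*γ)) -
      (1 + 2*γ*ε*(inner ℝ y e : ℝ) + ε^2 * (2*γ*(γ+1)*(inner ℝ y e : ℝ)^2 - γ*‖y‖^2))|
      ≤ C * |ε|^3 := by
  obtain ⟨C₁, hC₁0, hC₁⟩ := taylor1 γ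
  refine ⟨C₁ * (27*R^3) + |γ*(γ+1)|/2 * (5*R^4), by positivity, ?_⟩
  intro ε hε y hy
  have hR0 : (0:ℝ) < R := lt_of_lt_of_le one_pos hR
  have hε1 : |ε| ≤ 1 := le_trans hε (by rw [div_le_one (by positivity)]; nlinarith)
  set t : ℝ := (inner ℝ y e : ℝ) with ht
  set s : ℝ := ‖y‖^2 with hs
  set u : ℝ := -(2*ε*t) + ε^2*s with hu
  have hts : |t| ≤ R := by
    calc |t| ≤ ‖y‖ * ‖e‖ := abs_real_inner_le_norm y e
      _ ≤ R := by rw [he, mul_one]; exact hy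
  have hs0 : 0 ≤ s := sq_nonneg _
  have hsR : s ≤ R^2 := by rw [hs]; exact pow_le_pow_left₀ (norm_nonneg y) hy 2
  have hεR : |ε| * R ≤ 1/8 := by
    calc |ε| * R ≤ (1/(8*R)) * R := by exact mul_le_mul_of_nonneg_right hε hR0.le
      _ = 1/8 := by field_simp
  have huε : |u| ≤ 3*R* |ε| := by
    have h1 : |(-(2*ε*t))| ≤ 2*R* |ε| := by
      rw [abs_neg, abs_mul, abs_mul, abs_two]
      calc 2 * |ε| * |t| ≤ 2 * |ε| * R := by
            exact mul_le_mul_of_nonneg_left hts (by positivity)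
        _ = 2*R* |ε| := by ring
    have h2 : |ε^2*s| ≤ R* |ε| := by
      have he2 : |ε^2*s| = |ε| * |ε| *s := by
        rw [abs_mul, abs_of_nonneg hs0, sq, abs_mul]
      rw [he2]
      calc |ε| * |ε| *s ≤ |ε| * |ε| *R^2 := by exact mul_le_mul_of_nonneg_left hsR (by positivity)
        _ = (|ε| *R)*(|ε| *R) := by ring
        _ ≤ (1/8)*(|ε| *R) := mul_le_mul_of_nonneg_right hεR (by positivity)
        _ ≤ 1*(|ε| *R) := by nlinarith [abs_nonneg ε]
        _ = R* |ε| := by ring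
    calc |u| ≤ |(-(2*ε*t))| + |ε^2*s| := abs_add_le _ _
      _ ≤ 2*R* |ε| + R* |ε| := add_le_add h1 h2
      _ = 3*R* |ε| := by ring
  have hu12 : |u| ≤ 1/2 := by
    calc |u| ≤ 3*R* |ε| := huε
      _ = 3*(|ε| *R) := by ring
      _ ≤ 3*(1/8) := by exact mul_le_mul_of_nonneg_left hεR (by norm_num)
      _ ≤ 1/2 := by norm_num
  have hnormsq : ‖e - ε • y‖^2 = 1 + u := by
    rw [norm_sub_sq_real, he, norm_smul, real_inner_smul_right]
    simp only [Real.norm_eq_abs, mul_pow, sq_abs]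
    have hni : (inner ℝ e y : ℝ) = t := by rw [ht]; exact real_inner_comm y e
    rw [hni, hu, hs]
    ring
  have hA : ‖e - ε • y‖ ^ (-(2*γ)) = (1 + u) ^ (-γ) := by
    rw [← hnormsq]
    rw [show ‖e - ε • y‖^2 = ‖e - ε • y‖ ^ ((2:ℕ):ℝ) from (Real.rpow_natCast _ 2).symm]
    rw [← Real.rpow_mul (norm_nonneg _)]
    norm_num
  rw [hA]
  have hT := hC₁ u hu12
  have halg : (1 - γ * u + γ * (γ + 1) / 2 * u ^ 2) -
      (1 + 2*γ*ε*t + ε^2 * (2*γ*(γ+1)*t^2 - γ*s)) = γ*(γ+1)/2 * ε^3 * (-(4*t*s) + ε*s^2) := by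
    rw [hu]; ring
  have hrem : |γ*(γ+1)/2 * ε^3 * (-(4*t*s) + ε*s^2)| ≤ |γ*(γ+1)|/2 * (5*R^4) * |ε|^3 := by
    rw [abs_mul, abs_mul, abs_div, abs_pow]
    have h5 : |(-(4*t*s) + ε*s^2)| ≤ 5*R^4 := by
      have h6 : |(-(4*t*s))| ≤ 4*R^3 := by
        rw [abs_neg, abs_mul, abs_mul]
        have : |s| = s := abs_of_nonneg hs0
        rw [this]
        calc |(4:ℝ)| * |t| * s ≤ 4 * R * R^2 := by
              rw [abs_of_nonneg (by norm_num : (0:ℝ) ≤ 4)]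
              exact mul_le_mul (mul_le_mul_of_nonneg_left hts (by norm_num)) hsR hs0 (by positivity)
          _ = 4*R^3 := by ring
      have h7 : |ε*s^2| ≤ R^4 := by
        rw [abs_mul]
        calc |ε| * |s^2| ≤ 1 * R^4 := by
              apply mul_le_mul hε1 _ (abs_nonneg _) (by norm_num)
              rw [abs_of_nonneg (by positivity)]
              calc s^2 ≤ (R^2)^2 := pow_le_pow_left₀ hs0 hsR 2
                _ = R^4 := by ring
          _ = R^4 := by ring
      calc |(-(4*t*s) + ε*s^2)| ≤ |(-(4*t*s))| + |ε*s^2| := abs_add_le _ _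
        _ ≤ 4*R^3 + R^4 := add_le_add h6 h7
        _ ≤ 5*R^4 := by nlinarith [hR, pow_pos hR0 3]
    have habs2 : |(2:ℝ)| = 2 := by norm_num
    rw [habs2]
    calc |γ*(γ+1)|/2 * |ε|^3 * |(-(4*t*s) + ε*s^2)| ≤ |γ*(γ+1)|/2 * |ε|^3 * (5*R^4) := by
          exact mul_le_mul_of_nonneg_left h5 (by positivity)
      _ = |γ*(γ+1)|/2 * (5*R^4) * |ε|^3 := by ring
  have hu3 : |u|^3 ≤ (27*R^3) * |ε|^3 := by
    calc |u|^3 ≤ (3*R* |ε|)^3 := pow_le_pow_left₀ (abs_nonneg u) huε 3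
      _ = (27*R^3) * |ε|^3 := by ring
  calc |(1+u) ^ (-γ) - (1 + 2*γ*ε*t + ε^2 * (2*γ*(γ+1)*t^2 - γ*s))|
      = |((1+u)^(-γ) - (1 - γ*u + γ*(γ+1)/2*u^2)) +
          ((1 - γ*u + γ*(γ+1)/2*u^2) - (1 + 2*γ*ε*t + ε^2 * (2*γ*(γ+1)*t^2 - γ*s)))| := by
        congr 1; ring
    _ ≤ |(1+u)^(-γ) - (1 - γ*u + γ*(γ+1)/2*u^2)| +
          |(1 - γ*u + γ*(γ+1)/2*u^2) - (1 + 2*γ*ε*t + ε^2 * (2*γ*(γ+1)*t^2 - γ*s))| := abs_add_le _ _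
    _ ≤ C₁ * |u|^3 + |γ*(γ+1)|/2 * (5*R^4) * |ε|^3 := by
        apply add_le_add hT
        rw [halg]; exact hrem
    _ ≤ C₁ * ((27*R^3) * |ε|^3) + |γ*(γ+1)|/2 * (5*R^4) * |ε|^3 := by
        apply add_le_add (mul_le_mul_of_nonneg_left hu3 hC₁0) le_rfl
    _ = (C₁ * (27*R^3) + |γ*(γ+1)|/2 * (5*R^4)) * |ε|^3 := by ring

-- the key integral estimate
lemma key_est (γ : ℝ) {g : E → ℝ} (hgc : Continuous g) (hsupp : HasCompactSupport g)
    (hrad : ∀ x y : E, ‖x‖ = ‖y‖ → g x = g y)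
    (e : E) (he : ‖e‖ = 1) (R : ℝ) (hR : 1 ≤ R)
    (hRsupp : tsupport g ⊆ Metric.closedBall 0 R) :
    ∃ C' : ℝ, 0 ≤ C' ∧ ∀ ε : ℝ, |ε| ≤ 1/(8*R) →
      |(∫ y : E, ‖e - ε • y‖ ^ (-(2*γ)) * g y) -
        ((∫ y : E, g y) + ε^2 * (2*γ*(γ+1) * (∫ y : E, (inner ℝ y e : ℝ)^2 * g y)
            - γ * ∫ y : E, ‖y‖^2 * g y))| ≤ C' * |ε|^3 := by
  obtain ⟨C, hC0, hC⟩ := ptwise γ e he R hR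
  have hR0 : (0:ℝ) < R := lt_of_lt_of_le one_pos hR
  have gzero : ∀ y : E, R < ‖y‖ → g y = 0 := by
    intro y hy
    apply image_eq_zero_of_notMem_tsupport
    intro hmem
    have := hRsupp hmem
    rw [Metric.mem_closedBall, dist_zero_right] at this
    linarith
  have iI1 : Integrable g := hgc.integrable_of_hasCompactSupport hsupp
  have hct : Continuous fun y : E => (inner ℝ y e : ℝ) := continuous_id.inner continuous_const
  have iIt : Integrable (fun y : E => (inner ℝ y e : ℝ) * g y) := integ_mul hgc hsupp _ hct
  have iIt2 : Integrable (fun y : E => (inner ℝ y e : ℝ)^2 * g y) :=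
    integ_mul hgc hsupp _ (hct.pow 2)
  have iIs : Integrable (fun y : E => ‖y‖^2 * g y) :=
    integ_mul hgc hsupp _ (continuous_norm.pow 2)
  refine ⟨C * ∫ y : E, |g y|, by positivity, ?_⟩
  intro ε hε
  set A : E → ℝ := fun y => ‖e - ε • y‖ ^ (-(2*γ)) with hA
  set pl : E → ℝ := fun y =>
    1 + 2*γ*ε*(inner ℝ y e : ℝ) + ε^2 * (2*γ*(γ+1)*(inner ℝ y e : ℝ)^2 - γ*‖y‖^2) with hpl
  have hplc : Continuous pl := by
    apply Continuous.add
    apply Continuous.add continuous_const (continuous_const.mul hct)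
    exact continuous_const.mul ((continuous_const.mul (hct.pow 2)).sub
      (continuous_const.mul (continuous_norm.pow 2)))
  have iP : Integrable (fun y : E => pl y * g y) := integ_mul hgc hsupp _ hplc
  -- integral of pl * g
  have hIeq : (∫ y : E, pl y * g y) =
      (∫ y : E, g y) + ε^2 * (2*γ*(γ+1) * (∫ y : E, (inner ℝ y e : ℝ)^2 * g y)
        - γ * ∫ y : E, ‖y‖^2 * g y) := by
    have hsplit : ∀ y : E, pl y * g y = g y + (2*γ*ε) * ((inner ℝ y e : ℝ) * g y)
        + ε^2 * ((2*γ*(γ+1)) * ((inner ℝ y e : ℝ)^2 * g y) - γ * (‖y‖^2 * g y)) := by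
      intro y; rw [hpl]; ring
    rw [integral_congr_ae (Filter.Eventually.of_forall hsplit)]
    have i2 : Integrable (fun y : E => 2*γ*ε * ((inner ℝ y e : ℝ) * g y)) := iIt.const_mul _
    have i3 : Integrable (fun y : E =>
        ε^2 * (2*γ*(γ+1) * ((inner ℝ y e : ℝ)^2 * g y) - γ * (‖y‖^2 * g y))) :=
      ((iIt2.const_mul _).sub (iIs.const_mul _)).const_mul _
    have h1 : ∫ y : E, (g y + 2*γ*ε * ((inner ℝ y e : ℝ) * g y)
          + ε^2 * (2*γ*(γ+1) * ((inner ℝ y e : ℝ)^2 * g y) - γ * (‖y‖^2 * g y)))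
        = (∫ y : E, (g y + 2*γ*ε * ((inner ℝ y e : ℝ) * g y)))
          + ∫ y : E, ε^2 * (2*γ*(γ+1) * ((inner ℝ y e : ℝ)^2 * g y) - γ * (‖y‖^2 * g y)) :=
      integral_add (iI1.add i2) i3
    have h2 : (∫ y : E, (g y + 2*γ*ε * ((inner ℝ y e : ℝ) * g y)))
        = (∫ y : E, g y) + ∫ y : E, 2*γ*ε * ((inner ℝ y e : ℝ) * g y) := integral_add iI1 i2
    have h3 : (∫ y : E, 2*γ*ε * ((inner ℝ y e : ℝ) * g y))
        = 2*γ*ε * ∫ y : E, (inner ℝ y e : ℝ) * g y := integral_const_mul _ _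
    have h4 : (∫ y : E, ε^2 * (2*γ*(γ+1) * ((inner ℝ y e : ℝ)^2 * g y) - γ * (‖y‖^2 * g y)))
        = ε^2 * ∫ y : E, (2*γ*(γ+1) * ((inner ℝ y e : ℝ)^2 * g y) - γ * (‖y‖^2 * g y)) :=
      integral_const_mul _ _
    have h5 : (∫ y : E, (2*γ*(γ+1) * ((inner ℝ y e : ℝ)^2 * g y) - γ * (‖y‖^2 * g y)))
        = (∫ y : E, 2*γ*(γ+1) * ((inner ℝ y e : ℝ)^2 * g y)) - ∫ y : E, γ * (‖y‖^2 * g y) :=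
      integral_sub (iIt2.const_mul _) (iIs.const_mul _)
    have h6 : (∫ y : E, 2*γ*(γ+1) * ((inner ℝ y e : ℝ)^2 * g y))
        = 2*γ*(γ+1) * ∫ y : E, (inner ℝ y e : ℝ)^2 * g y := integral_const_mul _ _
    have h7 : (∫ y : E, γ * (‖y‖^2 * g y)) = γ * ∫ y : E, ‖y‖^2 * g y := integral_const_mul _ _
    rw [h1, h2, h3, h4, h5, h6, h7, first_moment_zero hgc hrad e]
    ring
  -- integrability of A * g
  have hAcont : Continuous (fun y : E => A y * g y) := by
    rw [continuous_iff_continuousAt]; intro y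
    by_cases hy : ‖e - ε • y‖ = 0
    · have hey : e = ε • y := by rwa [norm_sub_eq_zero_iff] at hy
      have hεy : |ε| * ‖y‖ = 1 := by
        have : ‖ε • y‖ = 1 := by rw [← hey, he]
        rwa [norm_smul, Real.norm_eq_abs] at this
      have hεne : ε ≠ 0 := by
        intro h0
        rw [h0] at hεy; simp at hεy
      have hyR : R < ‖y‖ := by
        have h8 : |ε| ≤ 1/(8*R) := hε
        have hεpos : 0 < |ε| := abs_pos.2 hεne
        have hy8 : ‖y‖ = 1/|ε| := by field_simp at hεy ⊢; linarith [hεy]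
        rw [hy8]
        rw [lt_div_iff₀ hεpos]
        calc R * |ε| ≤ R * (1/(8*R)) := mul_le_mul_of_nonneg_left h8 hR0.le
          _ = 1/8 := by field_simp
          _ < 1 := by norm_num
      have hev : (fun z : E => A z * g z) =ᶠ[nhds y] fun _ => 0 := by
        have hopen : IsOpen {z : E | R < ‖z‖} := isOpen_lt continuous_const continuous_norm
        filter_upwards [hopen.mem_nhds hyR] with z hz
        rw [gzero z hz, mul_zero]
      exact hev.continuousAt
    · exact (((continuous_const.sub (continuous_id.const_smul ε)).norm.continuousAt).rpow_const
        (Or.inl hy)).mul hgc.continuousAt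
  have iA : Integrable (fun y : E => A y * g y) :=
    hAcont.integrable_of_hasCompactSupport hsupp.mul_left
  -- pointwise bound
  have hbd : ∀ y : E, |A y * g y - pl y * g y| ≤ (C * |ε|^3) * |g y| := by
    intro y
    have : A y * g y - pl y * g y = (A y - pl y) * g y := by ring
    rw [this, abs_mul]
    by_cases hy : ‖y‖ ≤ R
    · exact mul_le_mul_of_nonneg_right (hC ε hε y hy) (abs_nonneg _)
    · rw [gzero y (not_le.1 hy)]
      simp
  -- conclude
  have hdiff : (∫ y : E, A y * g y) - (∫ y : E, pl y * g y)
      = ∫ y : E, (A y * g y - pl y * g y) := (integral_sub iA iP).symm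
  rw [← hIeq]
  rw [show (∫ y : E, ‖e - ε • y‖ ^ (-(2*γ)) * g y) = ∫ y : E, A y * g y from rfl]
  rw [hdiff]
  calc |∫ y : E, (A y * g y - pl y * g y)| ≤ ∫ y : E, |A y * g y - pl y * g y| :=
        by simpa [Real.norm_eq_abs] using norm_integral_le_integral_norm (fun y : E => A y * g y - pl y * g y)
    _ ≤ ∫ y : E, (C * |ε|^3) * |g y| := by
        apply integral_mono (iA.sub iP).abs ((iI1.abs).const_mul _) hbd
    _ = (C * ∫ y : E, |g y|) * |ε|^3 := by rw [integral_const_mul]; ring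

lemma change_var (γ : ℝ) (g : E → ℝ) (e : E) (n : ℕ) (hn : 0 < (n:ℝ)) :
    (∫ x : E, ‖x‖ ^ (-(2*γ)) * g (x + (n:ℝ) • e)) =
      (n:ℝ) ^ (-(2*γ)) * ∫ y : E, ‖e - (n:ℝ)⁻¹ • y‖ ^ (-(2*γ)) * g y := by
  have h1 : (∫ x : E, ‖x‖ ^ (-(2*γ)) * g (x + (n:ℝ) • e)) =
      ∫ y : E, ‖y - (n:ℝ) • e‖ ^ (-(2*γ)) * g y := by
    rw [← integral_add_right_eq_self (μ := volume)
      (fun x : E => ‖x - (n:ℝ) • e‖ ^ (-(2*γ)) * g x) ((n:ℝ) • e)]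
    simp only [add_sub_cancel_right]
  rw [h1]
  have h2 : ∀ y : E, ‖y - (n:ℝ) • e‖ ^ (-(2*γ)) * g y =
      (n:ℝ) ^ (-(2*γ)) * (‖e - (n:ℝ)⁻¹ • y‖ ^ (-(2*γ)) * g y) := by
    intro y
    have hsm : y - (n:ℝ) • e = (-(n:ℝ)) • (e - (n:ℝ)⁻¹ • y) := by
      match_scalars <;> field_simp
    have hnorm : ‖y - (n:ℝ) • e‖ = (n:ℝ) * ‖e - (n:ℝ)⁻¹ • y‖ := by
      rw [hsm, norm_smul, Real.norm_eq_abs, abs_neg, abs_of_pos hn]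
    rw [hnorm, Real.mul_rpow hn.le (norm_nonneg _)]
    ring
  rw [integral_congr_ae (Filter.Eventually.of_forall h2), integral_const_mul]


end

/-- For a smooth compactly supported radial function `g` on `ℝ^d` with `∫ g ≠ 0`,
a unit vector `e`, and `g_n(x) = g(x + n e)`, one has, with
`r(γ) = (2/d)γ(γ - (d-2)/2)`,
`∫ |x|^{-2γ} g_n = n^{-2γ}[∫g + (r(γ)/n²)∫|x|²g + o(n^{-2})]` as `n → ∞`. -/
theorem stmt11 (d : ℕ) (hd : 1 ≤ d) (γ : ℝ)
    (g : EuclideanSpace ℝ (Fin d) → ℝ) (hg : ContDiff ℝ (⊤ : ℕ∞) g)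
    (hsupp : HasCompactSupport g)
    (hrad : ∀ x y : EuclideanSpace ℝ (Fin d), ‖x‖ = ‖y‖ → g x = g y)
    (hint : (∫ x, g x) ≠ 0)
    (e : EuclideanSpace ℝ (Fin d)) (he : ‖e‖ = 1) :
    (fun n : ℕ =>
        (∫ x, ‖x‖ ^ (-(2 * γ)) * g (x + (n : ℝ) • e)) -
          (n : ℝ) ^ (-(2 * γ)) *
            ((∫ x, g x) +
              (2 / (d : ℝ)) * γ * (γ - ((d : ℝ) - 2) / 2) / (n : ℝ) ^ 2 *
                ∫ x, ‖x‖ ^ 2 * g x))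
      =o[atTop] fun n : ℕ => (n : ℝ) ^ (-(2 * γ)) / (n : ℝ) ^ 2 := by
  have hgc : Continuous g := hg.continuous
  -- choose the radius
  obtain ⟨R₀, hR₀⟩ := hsupp.isBounded.subset_closedBall (0 : EuclideanSpace ℝ (Fin d))
  set R : ℝ := max R₀ 1 with hRdef
  have hR1 : 1 ≤ R := le_max_right _ _
  have hR0 : (0:ℝ) < R := lt_of_lt_of_le one_pos hR1
  have hRsupp : tsupport g ⊆ Metric.closedBall 0 R :=
    hR₀.trans (Metric.closedBall_subset_closedBall (le_max_left _ _))
  obtain ⟨C', hC'0, hC'⟩ := key_est γ hgc hsupp hrad e he R hR1 hRsupp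
  -- the coefficient identity
  have hdpos : (0:ℝ) < d := by exact_mod_cast hd
  have havg := second_moment_avg hd hgc hsupp hrad he
  have hKeq : 2*γ*(γ+1) * (∫ y : EuclideanSpace ℝ (Fin d), (inner ℝ y e : ℝ)^2 * g y)
      - γ * (∫ y : EuclideanSpace ℝ (Fin d), ‖y‖^2 * g y)
      = (2 / (d:ℝ)) * γ * (γ - ((d:ℝ) - 2)/2) * ∫ y : EuclideanSpace ℝ (Fin d), ‖y‖^2 * g y := by
    have hIt2 : (∫ y : EuclideanSpace ℝ (Fin d), (inner ℝ y e : ℝ)^2 * g y)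
        = (∫ y : EuclideanSpace ℝ (Fin d), ‖y‖^2 * g y) / d := by
      rw [eq_div_iff hdpos.ne']
      linarith [havg]
    rw [hIt2]
    field_simp
    ring
  rw [isLittleO_iff]
  intro c hc
  have hex : ∃ N : ℕ, 8*R ≤ (N:ℝ) ∧ C'/c < (N:ℝ) := by
    obtain ⟨N₁, hN₁⟩ := exists_nat_ge (8*R)
    obtain ⟨N₂, hN₂⟩ := exists_nat_gt (C'/c)
    exact ⟨max N₁ N₂, le_trans hN₁ (by exact_mod_cast Nat.le_max_left _ _),
      lt_of_lt_of_le hN₂ (by exact_mod_cast Nat.le_max_right _ _)⟩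
  obtain ⟨N, hN8, hNc⟩ := hex
  filter_upwards [eventually_ge_atTop N] with n hn
  have hn8 : 8*R ≤ (n:ℝ) := le_trans hN8 (by exact_mod_cast hn)
  have hnc : C'/c < (n:ℝ) := lt_of_lt_of_le hNc (by exact_mod_cast hn)
  have hnpos : (0:ℝ) < n := by nlinarith
  have hεle : |((n:ℝ)⁻¹)| ≤ 1/(8*R) := by
    rw [abs_of_pos (inv_pos.2 hnpos), inv_eq_one_div]
    exact div_le_div_of_nonneg_left one_pos.le (by positivity) hn8
  set ε : ℝ := (n:ℝ)⁻¹ with hεdef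
  have hεpos : 0 < ε := inv_pos.2 hnpos
  have hcv := change_var γ g e n hnpos
  have hkey := hC' ε hεle
  set P : ℝ := (n:ℝ) ^ (-(2*γ)) with hPdef
  have hP : 0 < P := Real.rpow_pos_of_pos hnpos _
  have hε2 : ε^2 = ((n:ℝ)^2)⁻¹ := by rw [hεdef, inv_pow]
  have hcoef : (2 / (d:ℝ)) * γ * (γ - ((d:ℝ) - 2) / 2) / (n:ℝ)^2 * (∫ x, ‖x‖^2 * g x)
      = ε^2 * ((2*γ*(γ+1) * ∫ y : EuclideanSpace ℝ (Fin d), (inner ℝ y e : ℝ)^2 * g y)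
          - γ * ∫ y : EuclideanSpace ℝ (Fin d), ‖y‖^2 * g y) := by
    rw [hKeq, hε2]; ring
  have heq : (∫ x, ‖x‖ ^ (-(2 * γ)) * g (x + (n : ℝ) • e)) -
      (n : ℝ) ^ (-(2 * γ)) * ((∫ x, g x) +
        (2 / (d : ℝ)) * γ * (γ - ((d : ℝ) - 2) / 2) / (n : ℝ) ^ 2 * ∫ x, ‖x‖ ^ 2 * g x)
      = P * ((∫ y : EuclideanSpace ℝ (Fin d), ‖e - ε • y‖ ^ (-(2*γ)) * g y) -
          ((∫ y : EuclideanSpace ℝ (Fin d), g y) +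
            ε^2 * ((2*γ*(γ+1) * ∫ y : EuclideanSpace ℝ (Fin d), (inner ℝ y e : ℝ)^2 * g y)
              - γ * ∫ y : EuclideanSpace ℝ (Fin d), ‖y‖^2 * g y))) := by
    rw [hcv, hcoef, ← hPdef, ← hεdef]
    ring
  rw [Real.norm_eq_abs, Real.norm_eq_abs, heq, abs_mul, abs_of_pos hP,
    abs_of_pos (div_pos hP (pow_pos hnpos 2))]
  have habsε : |ε| = (n:ℝ)⁻¹ := abs_of_pos hεpos
  have h1 : C' ≤ c * n := by
    rw [div_lt_iff₀ hc] at hnc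
    linarith
  have h2 : C' * ((n:ℝ)⁻¹)^3 ≤ c * ((n:ℝ)^2)⁻¹ := by
    rw [inv_pow, ← div_eq_mul_inv, ← div_eq_mul_inv,
      div_le_div_iff₀ (pow_pos hnpos 3) (pow_pos hnpos 2)]
    calc C' * (n:ℝ)^2 ≤ (c * n) * (n:ℝ)^2 := by
          exact mul_le_mul_of_nonneg_right h1 (sq_nonneg _)
      _ = c * (n:ℝ)^3 := by ring
  calc P * |_root_.id ((∫ y : EuclideanSpace ℝ (Fin d), ‖e - ε • y‖ ^ (-(2*γ)) * g y) -
          ((∫ y : EuclideanSpace ℝ (Fin d), g y) +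
            ε^2 * ((2*γ*(γ+1) * ∫ y : EuclideanSpace ℝ (Fin d), (inner ℝ y e : ℝ)^2 * g y)
              - γ * ∫ y : EuclideanSpace ℝ (Fin d), ‖y‖^2 * g y)))|
      ≤ P * (C' * |ε|^3) := mul_le_mul_of_nonneg_left hkey hP.le
    _ = P * (C' * ((n:ℝ)⁻¹)^3) := by rw [habsε]
    _ ≤ P * (c * ((n:ℝ)^2)⁻¹) := mul_le_mul_of_nonneg_left h2 hP.le
    _ = c * (P / (n:ℝ)^2) := by ring
end

section
/- Let d ≥ 3, u a smooth positive radial solution of -u'' - ((d-1)/r)u' + u - u^{p-1} = 0 with sufficient decay, and set x₂ = ∫₀^∞|u'|²r^{d+1}dr, y₀ = ∫₀^∞|u|²r^{d-1}dr, y₂ = ∫₀^∞|u|²r^{d+1}dr, z₂ = ∫₀^∞|u|^p r^{d+1}dr. Then x₂ - d·y₀ + y₂ - z₂ = 0 and ((d-4)/2)x₂ + ((d+2)/2)y₂ - ((d+2)/p)z₂ = 0. -/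
open MeasureTheory Set Filter Asymptotics Topology

/-!
Multiplying the equation by `u r^{d+1}` and by `r u' r^{d+1}` turns it into exact derivatives:
`(u' u r^{d+1} - u² r^d)' = u'² r^{d+1} - d u² r^{d-1} + u² r^{d+1} - u^p r^{d+1}` and
`((u²/2 - u'²/2 - u^p/p) r^{d+2})'
  = (d-4)/2 u'² r^{d+1} + (d+2)/2 u² r^{d+1} - (d+2)/p u^p r^{d+1}`.
Both fluxes vanish at `r = 0` and, by exponential decay, at infinity, so the right-hand sides
integrate to zero.
-/

def ExpDecay (g : ℝ → ℝ) : Prop := ∃ a > 0, g =O[atTop] fun r => Real.exp (-a * r)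

namespace ExpDecay

variable {f g : ℝ → ℝ}

theorem of_abs_le {C c : ℝ} (hc : 0 < c)
    (h : ∀ r, 0 ≤ r → |g r| ≤ C * Real.exp (-c * r)) : ExpDecay g := by
  refine ⟨c, hc, IsBigO.of_bound C ?_⟩
  filter_upwards [eventually_ge_atTop 0] with r hr
  simpa only [Real.norm_eq_abs, Real.abs_exp] using h r hr

theorem mul (hf : ExpDecay f) (hg : ExpDecay g) : ExpDecay fun r => f r * g r := by
  obtain ⟨a, ha, hfa⟩ := hf
  obtain ⟨b, hb, hgb⟩ := hg
  refine ⟨a + b, by positivity, (hfa.mul hgb).congr_right fun r => ?_⟩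
  rw [← Real.exp_add]
  ring_nf

theorem rpow (hf : ExpDecay f) {p : ℝ} (hp : 0 < p) : ExpDecay fun r => f r ^ p := by
  obtain ⟨a, ha, hfa⟩ := hf
  refine ⟨a * p, by positivity,
    (hfa.rpow hp.le (.of_forall fun r => (Real.exp_pos _).le)).congr_right fun r => ?_⟩
  rw [← Real.exp_mul]
  ring_nf

theorem mul_pow (hg : ExpDecay g) (n : ℕ) : ExpDecay fun r => g r * r ^ n := by
  obtain ⟨a, ha, hga⟩ := hg
  refine ⟨a / 2, by positivity,
    (hga.mul (isLittleO_pow_exp_pos_mul_atTop n (half_pos ha)).isBigO).congr_right fun r => ?_⟩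
  rw [← Real.exp_add]
  ring_nf

theorem tendsto_zero (hg : ExpDecay g) : Tendsto g atTop (𝓝 0) := by
  obtain ⟨a, ha, hga⟩ := hg
  exact hga.trans_tendsto <| Real.tendsto_exp_atBot.comp <|
    tendsto_id.const_mul_atTop_of_neg (neg_lt_zero.mpr ha)

theorem pow_two (hf : ExpDecay f) : ExpDecay fun r => f r ^ 2 := by
  simpa only [sq] using hf.mul hf

theorem integrableOn_mul_pow (hg : ExpDecay g) (hc : Continuous g) (n : ℕ) :
    IntegrableOn (fun r => g r * r ^ n) (Ioi 0) :=
  let ⟨_, hb, hgb⟩ := hg.mul_pow n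
  integrable_of_isBigO_exp_neg hb (hc.mul (continuous_pow n)).continuousOn hgb

end ExpDecay

theorem integral_Ioi_eq_zero_of_hasDerivAt_of_tendsto {F f : ℝ → ℝ} {a : ℝ}
    (hcont : ContinuousWithinAt F (Ici a) a) (ha : F a = 0)
    (hderiv : ∀ x ∈ Ioi a, HasDerivAt F (f x) x) (hint : IntegrableOn f (Ioi a))
    (htend : Tendsto F atTop (𝓝 0)) : ∫ x in Ioi a, f x = 0 := by
  rw [integral_Ioi_of_hasDerivAt_of_tendsto hcont hderiv hint htend, ha, sub_zero]

section Pointwise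

variable {d : ℕ} {p : ℝ} {u v : ℝ → ℝ} {w r : ℝ}

theorem hasDerivAt_nehari_flux (hu : HasDerivAt u (v r) r) (hv : HasDerivAt v w r)
    (hr : r ≠ 0) (hur : u r ≠ 0)
    (hode : -w - ((d - 1) / r) * v r + u r - u r ^ (p - 1) = 0) :
    HasDerivAt (fun s => v s * u s * s ^ (d + 1) - u s ^ 2 * s ^ d)
      (v r ^ 2 * r ^ (d + 1) - d * (u r ^ 2 * r ^ (d - 1)) + u r ^ 2 * r ^ (d + 1)
        - u r ^ p * r ^ (d + 1)) r := by
  have hw : w = u r - u r ^ (p - 1) - (d - 1) / r * v r := by linarith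
  have hup : u r ^ p = u r ^ (p - 1) * u r := by
    rw [← Real.rpow_add_one hur, sub_add_cancel]
  refine (((hv.mul hu).mul (hasDerivAt_pow _ r)).sub
    ((hu.pow 2).mul (hasDerivAt_pow d r))).congr_deriv ?_
  simp only [Pi.mul_apply, Pi.pow_apply]
  rw [hw, hup, Nat.add_sub_cancel]
  field_simp
  push_cast
  ring

theorem hasDerivAt_pohozaev_flux (hp : p ≠ 0) (hu : HasDerivAt u (v r) r) (hv : HasDerivAt v w r)
    (hr : r ≠ 0) (hur : u r ≠ 0)
    (hode : -w - ((d - 1) / r) * v r + u r - u r ^ (p - 1) = 0) :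
    HasDerivAt (fun s => (u s ^ 2 / 2 - v s ^ 2 / 2 - u s ^ p / p) * s ^ (d + 2))
      ((d - 4) / 2 * (v r ^ 2 * r ^ (d + 1)) + (d + 2) / 2 * (u r ^ 2 * r ^ (d + 1))
        - (d + 2) / p * (u r ^ p * r ^ (d + 1))) r := by
  have hw : w = u r - u r ^ (p - 1) - (d - 1) / r * v r := by linarith
  have hup : u r ^ p = u r ^ (p - 1) * u r := by
    rw [← Real.rpow_add_one hur, sub_add_cancel]
  refine ((((hu.pow 2).div_const 2).sub ((hv.pow 2).div_const 2)).sub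
    ((hu.rpow_const (Or.inl hur)).div_const p)).mul (hasDerivAt_pow _ r) |>.congr_deriv ?_
  simp only [Pi.sub_apply, Pi.pow_apply]
  rw [hw, hup, show d + 2 - 1 = d + 1 by omega]
  field_simp
  push_cast
  ring

end Pointwise

structure IsRadialGroundState (d : ℕ) (p : ℝ) (u : ℝ → ℝ) : Prop where
  contDiff : ContDiff ℝ 2 u
  pos : ∀ r, 0 < r → 0 < u r
  ode : ∀ r, 0 < r →
    -(deriv (deriv u) r) - (((d : ℝ) - 1) / r) * deriv u r + u r - u r ^ (p - 1) = 0
  expDecay : ExpDecay u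
  expDecay_deriv : ExpDecay (deriv u)

namespace IsRadialGroundState

variable {d : ℕ} {p : ℝ} {u : ℝ → ℝ}

theorem hasDerivAt (h : IsRadialGroundState d p u) (r : ℝ) : HasDerivAt u (deriv u r) r :=
  (h.contDiff.differentiable (by norm_num) r).hasDerivAt

theorem hasDerivAt_deriv (h : IsRadialGroundState d p u) (r : ℝ) :
    HasDerivAt (deriv u) (deriv (deriv u) r) r :=
  (h.contDiff.differentiable_deriv_two r).hasDerivAt

theorem continuous (h : IsRadialGroundState d p u) : Continuous u :=
  h.contDiff.continuous

theorem continuous_deriv (h : IsRadialGroundState d p u) : Continuous (deriv u) :=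
  h.contDiff.differentiable_deriv_two.continuous

theorem continuous_rpow (h : IsRadialGroundState d p u) (hp : 0 ≤ p) :
    Continuous fun r => u r ^ p :=
  h.continuous.rpow_const fun _ => Or.inr hp

theorem integrable_deriv_sq_mul_pow (h : IsRadialGroundState d p u) (n : ℕ) :
    Integrable (fun r => deriv u r ^ 2 * r ^ n) (volume.restrict (Ioi 0)) :=
  h.expDecay_deriv.pow_two.integrableOn_mul_pow (h.continuous_deriv.pow 2) n

theorem integrable_sq_mul_pow (h : IsRadialGroundState d p u) (n : ℕ) :
    Integrable (fun r => u r ^ 2 * r ^ n) (volume.restrict (Ioi 0)) :=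
  h.expDecay.pow_two.integrableOn_mul_pow (h.continuous.pow 2) n

theorem integrable_rpow_mul_pow (h : IsRadialGroundState d p u) (hp : 0 < p) (n : ℕ) :
    Integrable (fun r => u r ^ p * r ^ n) (volume.restrict (Ioi 0)) :=
  (h.expDecay.rpow hp).integrableOn_mul_pow (h.continuous_rpow hp.le) n

theorem nehari_identity (h : IsRadialGroundState d p u) (hd : d ≠ 0) (hp : 0 < p) :
    (∫ r in Ioi (0 : ℝ), deriv u r ^ 2 * r ^ (d + 1))
      - d * (∫ r in Ioi (0 : ℝ), u r ^ 2 * r ^ (d - 1))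
      + (∫ r in Ioi (0 : ℝ), u r ^ 2 * r ^ (d + 1))
      - (∫ r in Ioi (0 : ℝ), u r ^ p * r ^ (d + 1)) = 0 := by
  have := h.integrable_deriv_sq_mul_pow (d + 1)
  have := h.integrable_sq_mul_pow (d - 1)
  have := h.integrable_sq_mul_pow (d + 1)
  have := h.integrable_rpow_mul_pow hp (d + 1)
  have hflux_cont : Continuous fun s => deriv u s * u s * s ^ (d + 1) - u s ^ 2 * s ^ d := by
    have := h.continuous; have := h.continuous_deriv; fun_prop
  have hflux_tendsto : Tendsto (fun s => deriv u s * u s * s ^ (d + 1) - u s ^ 2 * s ^ d)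
      atTop (𝓝 0) := by
    simpa using ((h.expDecay_deriv.mul h.expDecay).mul_pow (d + 1)).tendsto_zero.sub
      (h.expDecay.pow_two.mul_pow d).tendsto_zero
  have key := integral_Ioi_eq_zero_of_hasDerivAt_of_tendsto hflux_cont.continuousWithinAt
    (by simp [hd]) (fun r hr => hasDerivAt_nehari_flux (h.hasDerivAt r) (h.hasDerivAt_deriv r)
      (ne_of_gt hr) (h.pos r hr).ne' (h.ode r hr)) (by unfold IntegrableOn; fun_prop) hflux_tendsto
  rw [integral_sub, integral_add, integral_sub, integral_const_mul] at key
  all_goals first | exact key | fun_prop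

theorem pohozaev_identity (h : IsRadialGroundState d p u) (hp : 0 < p) :
    ((d : ℝ) - 4) / 2 * (∫ r in Ioi (0 : ℝ), deriv u r ^ 2 * r ^ (d + 1))
      + ((d : ℝ) + 2) / 2 * (∫ r in Ioi (0 : ℝ), u r ^ 2 * r ^ (d + 1))
      - ((d : ℝ) + 2) / p * (∫ r in Ioi (0 : ℝ), u r ^ p * r ^ (d + 1)) = 0 := by
  have := h.integrable_deriv_sq_mul_pow (d + 1)
  have := h.integrable_sq_mul_pow (d + 1)
  have := h.integrable_rpow_mul_pow hp (d + 1)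
  have hflux_cont : Continuous
      fun s => (u s ^ 2 / 2 - deriv u s ^ 2 / 2 - u s ^ p / p) * s ^ (d + 2) := by
    have := h.continuous; have := h.continuous_deriv; have := h.continuous_rpow hp.le; fun_prop
  have hflux_tendsto : Tendsto
      (fun s => (u s ^ 2 / 2 - deriv u s ^ 2 / 2 - u s ^ p / p) * s ^ (d + 2)) atTop (𝓝 0) := by
    have := (((h.expDecay.pow_two.mul_pow (d + 2)).tendsto_zero.div_const 2).sub
      ((h.expDecay_deriv.pow_two.mul_pow (d + 2)).tendsto_zero.div_const 2)).sub
      (((h.expDecay.rpow hp).mul_pow (d + 2)).tendsto_zero.div_const p)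
    simpa only [zero_div, sub_zero] using this.congr fun s => by ring
  have key := integral_Ioi_eq_zero_of_hasDerivAt_of_tendsto hflux_cont.continuousWithinAt
    (by simp) (fun r hr => hasDerivAt_pohozaev_flux hp.ne' (h.hasDerivAt r)
      (h.hasDerivAt_deriv r) (ne_of_gt hr) (h.pos r hr).ne' (h.ode r hr))
    (by unfold IntegrableOn; fun_prop) hflux_tendsto
  rw [integral_sub, integral_add, integral_const_mul, integral_const_mul, integral_const_mul]
    at key
  all_goals first | exact key | fun_prop

end IsRadialGroundState

theorem stmt13_general (d : ℕ) (hd : 3 ≤ d) (p : ℝ) (hp : 2 < p)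
    (u : ℝ → ℝ) (hu : ContDiff ℝ 2 u) (hpos : ∀ r : ℝ, 0 < r → 0 < u r)
    (hODE : ∀ r : ℝ, 0 < r →
      -(deriv (deriv u) r) - (((d : ℝ) - 1) / r) * deriv u r + u r - u r ^ (p - 1) = 0)
    (hdecay : ∃ C > (0 : ℝ), ∃ c > (0 : ℝ),
      ∀ r : ℝ, 0 ≤ r → |u r| + |deriv u r| ≤ C * Real.exp (-c * r)) :
    (∫ r in Set.Ioi (0 : ℝ), (deriv u r) ^ 2 * r ^ (d + 1)) -
        (d : ℝ) * (∫ r in Set.Ioi (0 : ℝ), (u r) ^ 2 * r ^ (d - 1)) +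
        (∫ r in Set.Ioi (0 : ℝ), (u r) ^ 2 * r ^ (d + 1)) -
        (∫ r in Set.Ioi (0 : ℝ), u r ^ p * r ^ (d + 1)) = 0 ∧
    (((d : ℝ) - 4) / 2) * (∫ r in Set.Ioi (0 : ℝ), (deriv u r) ^ 2 * r ^ (d + 1)) +
        (((d : ℝ) + 2) / 2) * (∫ r in Set.Ioi (0 : ℝ), (u r) ^ 2 * r ^ (d + 1)) -
        (((d : ℝ) + 2) / p) * (∫ r in Set.Ioi (0 : ℝ), u r ^ p * r ^ (d + 1)) = 0 := by
  obtain ⟨C, -, c, hc, hbound⟩ := hdecay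
  have h : IsRadialGroundState d p u :=
    { contDiff := hu
      pos := hpos
      ode := hODE
      expDecay := .of_abs_le hc fun r hr =>
        (le_add_of_nonneg_right (abs_nonneg _)).trans (hbound r hr)
      expDecay_deriv := .of_abs_le hc fun r hr =>
        (le_add_of_nonneg_left (abs_nonneg _)).trans (hbound r hr) }
  have hp₀ : 0 < p := by linarith
  exact ⟨h.nehari_identity (by omega) hp₀, h.pohozaev_identity hp₀⟩

/-- For a positive radial ground state `u` of `-u'' - ((d-1)/r)u' + u - u^{p-1} = 0`
(`d ≥ 3`, `p ∈ (2, 2d/(d-2))`), with exponential decay of `u, u'` and `u'(0) = 0`,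
the integrals `x₂ = ∫ u'² r^{d+1}`, `y₀ = ∫ u² r^{d-1}`, `y₂ = ∫ u² r^{d+1}`,
`z₂ = ∫ u^p r^{d+1}` satisfy `x₂ - d y₀ + y₂ - z₂ = 0` and
`((d-4)/2)x₂ + ((d+2)/2)y₂ - ((d+2)/p)z₂ = 0`. -/
theorem stmt13 (d : ℕ) (hd : 3 ≤ d) (p : ℝ) (hp : 2 < p) (hp2 : p < 2 * d / ((d : ℝ) - 2))
    (u : ℝ → ℝ) (hu : ContDiff ℝ 2 u) (hpos : ∀ r : ℝ, 0 < r → 0 < u r)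
    (hODE : ∀ r : ℝ, 0 < r →
      -(deriv (deriv u) r) - (((d : ℝ) - 1) / r) * deriv u r + u r - u r ^ (p - 1) = 0)
    (hu'0 : deriv u 0 = 0)
    (hdecay : ∃ C > (0 : ℝ), ∃ c > (0 : ℝ),
      ∀ r : ℝ, 0 ≤ r → |u r| + |deriv u r| ≤ C * Real.exp (-c * r)) :
    (∫ r in Set.Ioi (0 : ℝ), (deriv u r) ^ 2 * r ^ (d + 1)) -
        (d : ℝ) * (∫ r in Set.Ioi (0 : ℝ), (u r) ^ 2 * r ^ (d - 1)) +
        (∫ r in Set.Ioi (0 : ℝ), (u r) ^ 2 * r ^ (d + 1)) -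
        (∫ r in Set.Ioi (0 : ℝ), u r ^ p * r ^ (d + 1)) = 0 ∧
    (((d : ℝ) - 4) / 2) * (∫ r in Set.Ioi (0 : ℝ), (deriv u r) ^ 2 * r ^ (d + 1)) +
        (((d : ℝ) + 2) / 2) * (∫ r in Set.Ioi (0 : ℝ), (u r) ^ 2 * r ^ (d + 1)) -
        (((d : ℝ) + 2) / p) * (∫ r in Set.Ioi (0 : ℝ), u r ^ p * r ^ (d + 1)) = 0 :=
  stmt13_general d hd p hp u hu hpos hODE hdecay
end
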